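/- Every Dynamic Oblivious Equilibrium has the Asymptotic Markov Equilibrium property: if ν is a DOE of the continuum game, then for every initial exogenous state s₀ ∈ 𝒮, every initial consumer type x₀ ∈ 𝒳₀, and every sequence of history-dependent strategies {κⁿ}, one has limsup_{n→∞} ( Vⁿ_{i,0}(x₀, s₀ | κⁿ, ν) − Vⁿ_{i,0}(x₀, s₀ | ν, ν) ) ≤ 0, i.e., asymptotically no consumer can gain by deviating from the DOE strategy when all other consumers use it. -/

import Mathlib

/-!
Dynamic pricing model of Tsitsiklis and Xu, "Pricing of Fluctuations in
Electricity Markets".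

* `S` : finite exogenous state space, evolving as a Markov chain with kernel `K`;
* `X0` : finite set of consumer types, with type distribution `eta s0` given the
  initial exogenous state `s0`;
* actions lie in `[0, B]`, internal states in `[0, Zbd]`, updated by `r`;
* `U t x z s a` : stage utility; `Cc`, `Hc0`, `Hc` : continuum primary and
  ancillary cost functions, with (partial) derivatives `dC`, `dH0`, `dH1`
  (w.r.t. the first demand argument) and `dH2` (w.r.t. the second).
In the `n`-consumer model the costs scale as `Cⁿ(A,s) = n * Cc (A/n) s` etc., so
the `n`-consumer prices are the continuum marginal costs evaluated at the
per-capita demand `A / n`.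
-/

noncomputable section

structure ElecModel (S : Type*) (X0 : Type*) [Fintype S] [DecidableEq S] [Fintype X0] where
  T : ℕ
  B : ℝ
  B_pos : 0 < B
  Zbd : ℝ
  K : S → S → ℝ
  K_nonneg : ∀ s s', 0 ≤ K s s'
  K_sum : ∀ s, ∑ s' : S, K s s' = 1
  eta : S → X0 → ℝ
  eta_nonneg : ∀ s x, 0 ≤ eta s x
  eta_sum : ∀ s, ∑ x : X0, eta s x = 1
  r : X0 → ℝ → ℝ → S → ℝ
  U : ℕ → X0 → ℝ → S → ℝ → ℝ
  Cc : ℝ → S → ℝ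
  Hc0 : ℝ → S → ℝ
  Hc : ℝ → ℝ → S → S → ℝ
  dC : ℝ → S → ℝ
  dH0 : ℝ → S → ℝ
  dH1 : ℝ → ℝ → S → S → ℝ
  dH2 : ℝ → ℝ → S → S → ℝ

namespace ElecModel

variable {S : Type*} {X0 : Type*} [Fintype S] [DecidableEq S] [Fintype X0] [DecidableEq X0]

/-- A dynamic oblivious strategy: the action depends only on the consumer's type and
the history of exogenous states up to the current stage. -/
structure OblStrategy (M : ElecModel S X0) where
  act : ℕ → X0 → (ℕ → S) → ℝ
  act_mem : ∀ t x h, act t x h ∈ Set.Icc (0 : ℝ) M.B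
  act_prefix : ∀ t x h h', (∀ τ ≤ t, h τ = h' τ) → act t x h = act t x h'

/-- A history-dependent strategy: the action depends on the consumer's augmented state
`(previous action, type, internal state)`, the history of exogenous states up to the
current stage, and the empirical distribution (as a multiset) of the other consumers'
augmented states. -/
structure HistStrategy (M : ElecModel S X0) where
  act : ℕ → ℝ × X0 × ℝ → (ℕ → S) → Multiset (ℝ × X0 × ℝ) → ℝ
  act_mem : ∀ t y h f, act t y h f ∈ Set.Icc (0 : ℝ) M.B
  act_prefix : ∀ t y h h' f, (∀ τ ≤ t, h τ = h' τ) → act t y h f = act t y h' f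

/-- Probability of the Markov chain of exogenous states following `h` on stages `0,…,T`,
starting from `s0`. -/
def histProb (M : ElecModel S X0) (s0 : S) (h : ℕ → S) : ℝ :=
  (if h 0 = s0 then (1 : ℝ) else 0) * ∏ t ∈ Finset.range M.T, M.K (h t) (h (t + 1))

def extendHist (M : ElecModel S X0) (g : Fin (M.T + 1) → S) : ℕ → S :=
  fun n => g ⟨min n M.T, Nat.lt_succ_of_le (min_le_right n M.T)⟩

/-- Expectation, over the Markov histories of exogenous states starting at `s0`,
of a function of the history. -/
def expectHist (M : ElecModel S X0) (s0 : S) (F : (ℕ → S) → ℝ) : ℝ :=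
  ∑ g : Fin (M.T + 1) → S, M.histProb s0 (M.extendHist g) * F (M.extendHist g)

/-- The internal state trajectory of a consumer of type `x` along history `h`
under the action sequence `a` : `z 0 = 0`, `z (t+1) = r x (z t) (a t) (h (t+1))`. -/
def zTraj (M : ElecModel S X0) (x : X0) (h : ℕ → S) (a : ℕ → ℝ) : ℕ → ℝ
  | 0 => 0
  | t + 1 => M.zTraj x h a t |> fun z => M.r x z (a t) (h (t + 1))

/-- Average (per-capita) demand in the continuum model under the oblivious strategy `ν`. -/
def avgDemand (M : ElecModel S X0) (ν : OblStrategy M) (s0 : S) (h : ℕ → S) (t : ℕ) : ℝ :=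
  ∑ x : X0, M.eta s0 x * ν.act t x h

/-- Continuum price `p̃_t`. -/
def pTil (M : ElecModel S X0) (ν : OblStrategy M) (s0 : S) (h : ℕ → S) (t : ℕ) : ℝ :=
  M.dC (M.avgDemand ν s0 h t) (h t)

/-- Continuum price `w̃_t`. -/
def wTil (M : ElecModel S X0) (ν : OblStrategy M) (s0 : S) (h : ℕ → S) : ℕ → ℝ
  | 0 => M.dH0 (M.avgDemand ν s0 h 0) (h 0)
  | t + 1 => M.dH2 (M.avgDemand ν s0 h t) (M.avgDemand ν s0 h (t + 1)) (h t) (h (t + 1))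

/-- Continuum price `q̃_t` (charged on the previous stage's demand). -/
def qTil (M : ElecModel S X0) (ν : OblStrategy M) (s0 : S) (h : ℕ → S) : ℕ → ℝ
  | 0 => 0
  | t + 1 => M.dH1 (M.avgDemand ν s0 h t) (M.avgDemand ν s0 h (t + 1)) (h t) (h (t + 1))

/-- Total oblivious stage value along a history: consumer of type `x` follows `νhat`,
prices are induced by `ν`. -/
def oblStageSum (M : ElecModel S X0) (νhat ν : OblStrategy M) (s0 : S) (x : X0)
    (h : ℕ → S) : ℝ :=
  ∑ t ∈ Finset.range (M.T + 1),
    (M.U t x (M.zTraj x h (fun τ => νhat.act τ x h) t) (h t) (νhat.act t x h)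
      - (M.pTil ν s0 h t + M.wTil ν s0 h t) * νhat.act t x h
      - M.qTil ν s0 h t * (if t = 0 then 0 else νhat.act (t - 1) x h))

/-- Oblivious value function `Ṽ_{i,0}(x₀, s₀ ∣ ν̂, ν)`. -/
def oblValue (M : ElecModel S X0) (νhat ν : OblStrategy M) (x0 : X0) (s0 : S) : ℝ :=
  M.expectHist s0 (fun h => M.oblStageSum νhat ν s0 x0 h)

/-- A Dynamic Oblivious Equilibrium. -/
def IsDOE (M : ElecModel S X0) (ν : OblStrategy M) : Prop :=
  ∀ (νhat : OblStrategy M) (x0 : X0) (s0 : S),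
    M.oblValue νhat ν x0 s0 ≤ M.oblValue ν ν x0 s0

/-- The previous action of a consumer following the oblivious strategy `ν` (zero at stage 0). -/
def prevActObl (M : ElecModel S X0) (ν : OblStrategy M) (x : X0) (h : ℕ → S) : ℕ → ℝ
  | 0 => 0
  | t + 1 => ν.act t x h

/-- The empirical distribution (multiset) of the augmented states of the `m` consumers
other than `i`, all following the oblivious strategy `ν`, with type profile `ω`. -/
def othersAug (M : ElecModel S X0) (m : ℕ) (ν : OblStrategy M) (ω : Fin m → X0)
    (h : ℕ → S) (t : ℕ) : Multiset (ℝ × X0 × ℝ) :=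
  (Finset.univ : Finset (Fin m)).val.map
    (fun j => (M.prevActObl ν (ω j) h t, ω j, M.zTraj (ω j) h (fun τ => ν.act τ (ω j) h) t))

/-- Consumer `i`'s trajectory `(action at t, internal state at t)` in the `(m+1)`-consumer
game when she plays the history-dependent strategy `κ` while the `m` other consumers
(with type profile `ω`) play the oblivious strategy `ν`. -/
def iTraj (M : ElecModel S X0) (m : ℕ) (κ : HistStrategy M) (ν : OblStrategy M)
    (x0 : X0) (ω : Fin m → X0) (h : ℕ → S) : ℕ → ℝ × ℝ
  | 0 => (κ.act 0 ((0 : ℝ), x0, (0 : ℝ)) h (M.othersAug m ν ω h 0), 0)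
  | t + 1 =>
      M.iTraj m κ ν x0 ω h t |> fun prev =>
        (M.r x0 prev.2 prev.1 (h (t + 1))) |> fun z' =>
          (κ.act (t + 1) (prev.1, x0, z') h (M.othersAug m ν ω h (t + 1)), z')

/-- Aggregate demand in the `(m+1)`-consumer game. -/
def aggDemandN (M : ElecModel S X0) (m : ℕ) (κ : HistStrategy M) (ν : OblStrategy M)
    (x0 : X0) (ω : Fin m → X0) (h : ℕ → S) (t : ℕ) : ℝ :=
  (M.iTraj m κ ν x0 ω h t).1 + ∑ j : Fin m, ν.act t (ω j) h

/-- `n`-consumer price `p_t = (Cⁿ)'(A_t, s_t) = C̃'(A_t/n, s_t)`, with `n = m+1`. -/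
def pN (M : ElecModel S X0) (m : ℕ) (κ : HistStrategy M) (ν : OblStrategy M)
    (x0 : X0) (ω : Fin m → X0) (h : ℕ → S) (t : ℕ) : ℝ :=
  M.dC (M.aggDemandN m κ ν x0 ω h t / ((m : ℝ) + 1)) (h t)

/-- `n`-consumer price `w_t`, with `n = m+1`. -/
def wN (M : ElecModel S X0) (m : ℕ) (κ : HistStrategy M) (ν : OblStrategy M)
    (x0 : X0) (ω : Fin m → X0) (h : ℕ → S) : ℕ → ℝ
  | 0 => M.dH0 (M.aggDemandN m κ ν x0 ω h 0 / ((m : ℝ) + 1)) (h 0)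
  | t + 1 =>
      M.dH2 (M.aggDemandN m κ ν x0 ω h t / ((m : ℝ) + 1))
        (M.aggDemandN m κ ν x0 ω h (t + 1) / ((m : ℝ) + 1)) (h t) (h (t + 1))

/-- `n`-consumer price `q_t` (charged on the previous stage's demand), with `n = m+1`. -/
def qN (M : ElecModel S X0) (m : ℕ) (κ : HistStrategy M) (ν : OblStrategy M)
    (x0 : X0) (ω : Fin m → X0) (h : ℕ → S) : ℕ → ℝ
  | 0 => 0
  | t + 1 =>
      M.dH1 (M.aggDemandN m κ ν x0 ω h t / ((m : ℝ) + 1))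
        (M.aggDemandN m κ ν x0 ω h (t + 1) / ((m : ℝ) + 1)) (h t) (h (t + 1))

/-- Consumer `i`'s total payoff along the history `h`. -/
def iPayoff (M : ElecModel S X0) (m : ℕ) (κ : HistStrategy M) (ν : OblStrategy M)
    (x0 : X0) (ω : Fin m → X0) (h : ℕ → S) : ℝ :=
  ∑ t ∈ Finset.range (M.T + 1),
    (M.U t x0 (M.iTraj m κ ν x0 ω h t).2 (h t) (M.iTraj m κ ν x0 ω h t).1
      - (M.pN m κ ν x0 ω h t + M.wN m κ ν x0 ω h t) * (M.iTraj m κ ν x0 ω h t).1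
      - M.qN m κ ν x0 ω h t * (if t = 0 then 0 else (M.iTraj m κ ν x0 ω h (t - 1)).1))

/-- Consumer `i`'s expected payoff `Vⁿ_{i,0}(x₀, s₀ ∣ κ, ν)` in the `(m+1)`-consumer game:
the other `m` consumers' types are drawn i.i.d. from `eta s0` and all of them use `ν`. -/
def Vn (M : ElecModel S X0) (m : ℕ) (κ : HistStrategy M) (ν : OblStrategy M)
    (x0 : X0) (s0 : S) : ℝ :=
  ∑ ω : Fin m → X0, (∏ j : Fin m, M.eta s0 (ω j)) *
    M.expectHist s0 (fun h => M.iPayoff m κ ν x0 ω h)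

/-- An oblivious strategy regarded as a history-dependent strategy. -/
def OblStrategy.toHist {M : ElecModel S X0} (ν : OblStrategy M) : HistStrategy M where
  act := fun t y h _ => ν.act t y.2.1 h
  act_mem := fun t y h _ => ν.act_mem t y.2.1 h
  act_prefix := fun t y h h' _ hp => ν.act_prefix t y.2.1 h h' hp

/-- Stage social welfare in the continuum model. -/
def contStageWelfare (M : ElecModel S X0) (ν : OblStrategy M) (s0 : S) (h : ℕ → S)
    (t : ℕ) : ℝ :=
  (∑ x : X0, M.eta s0 x *
      M.U t x (M.zTraj x h (fun τ => ν.act τ x h) t) (h t) (ν.act t x h))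
    - M.Cc (M.avgDemand ν s0 h t) (h t)
    - (if t = 0 then M.Hc0 (M.avgDemand ν s0 h 0) (h 0)
        else M.Hc (M.avgDemand ν s0 h (t - 1)) (M.avgDemand ν s0 h t) (h (t - 1)) (h t))

/-- Expected social welfare `W̃₀(s₀ ∣ ν)` in the continuum model. -/
def contWelfare (M : ElecModel S X0) (ν : OblStrategy M) (s0 : S) : ℝ :=
  M.expectHist s0 (fun h => ∑ t ∈ Finset.range (M.T + 1), M.contStageWelfare ν s0 h t)

/-- Joint trajectory `(action at t, internal state at t)` of the `n` consumers with type
profile `ω` when all of them use the history-dependent strategy `κ`. -/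
def jointTraj (M : ElecModel S X0) (n : ℕ) (κ : HistStrategy M) (ω : Fin n → X0)
    (h : ℕ → S) : ℕ → Fin n → ℝ × ℝ
  | 0 => fun i =>
      (κ.act 0 ((0 : ℝ), ω i, (0 : ℝ)) h
        (((Finset.univ : Finset (Fin n)).erase i).val.map fun j => ((0 : ℝ), ω j, (0 : ℝ))), 0)
  | t + 1 => fun i =>
      M.jointTraj n κ ω h t |> fun prev =>
        (fun j : Fin n => ((prev j).1, ω j, M.r (ω j) (prev j).2 (prev j).1 (h (t + 1))))
          |> fun aug =>
            (κ.act (t + 1) (aug i) h (((Finset.univ : Finset (Fin n)).erase i).val.map aug),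
              M.r (ω i) (prev i).2 (prev i).1 (h (t + 1)))

/-- Aggregate demand in the `n`-consumer game when everyone uses `κ`. -/
def aggDemandAll (M : ElecModel S X0) (n : ℕ) (κ : HistStrategy M) (ω : Fin n → X0)
    (h : ℕ → S) (t : ℕ) : ℝ :=
  ∑ i : Fin n, (M.jointTraj n κ ω h t i).1

/-- Realized total social welfare along the history `h` in the `n`-consumer game under the
symmetric strategy profile `(κ,…,κ)`; the `n`-consumer costs are `n * C̃(A/n)` etc. -/
def welfProfile (M : ElecModel S X0) (n : ℕ) (κ : HistStrategy M) (ω : Fin n → X0)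
    (h : ℕ → S) : ℝ :=
  ∑ t ∈ Finset.range (M.T + 1),
    ((∑ i : Fin n, M.U t (ω i) (M.jointTraj n κ ω h t i).2 (h t) (M.jointTraj n κ ω h t i).1)
      - (n : ℝ) * M.Cc (M.aggDemandAll n κ ω h t / n) (h t)
      - (if t = 0 then (n : ℝ) * M.Hc0 (M.aggDemandAll n κ ω h 0 / n) (h 0)
          else (n : ℝ) * M.Hc (M.aggDemandAll n κ ω h (t - 1) / n)
                 (M.aggDemandAll n κ ω h t / n) (h (t - 1)) (h t)))

/-- Expected social welfare `𝒲ⁿ₀` in the `n`-consumer game under the symmetric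
profile `(κ,…,κ)`, the expectation taken over the i.i.d. consumer types
(equivalently, over the initial population state) and the Markov exogenous states. -/
def expWelfN (M : ElecModel S X0) (n : ℕ) (κ : HistStrategy M) (s0 : S) : ℝ :=
  ∑ ω : Fin n → X0, (∏ i : Fin n, M.eta s0 (ω i)) *
    M.expectHist s0 (fun h => M.welfProfile n κ ω h)

/-- Cumulative utility `Ū_{h_T}(x₀, a₀, …, a_T)` of a type-`x₀` consumer along history `h`
as a function of her action sequence, the internal states being generated by `r`. -/
def cumUtility (M : ElecModel S X0) (x0 : X0) (h : ℕ → S) (a : ℕ → ℝ) : ℝ :=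
  ∑ t ∈ Finset.range (M.T + 1), M.U t x0 (M.zTraj x0 h a t) (h t) (a t)

/-- The initial population state (empirical type distribution) of the type profile `ω`. -/
def popState (n : ℕ) (ω : Fin n → X0) (x : X0) : ℝ :=
  ((Finset.univ.filter fun i => ω i = x).card : ℝ) / n

/-- Assumptions 1–3 of the paper: differentiability of the cost functions, monotone
primary cost, marginal costs bounded by `P` and uniformly equicontinuous on `[0,∞)`,
utilities with values in `[0,Q]` and continuous in the action, internal states
staying in `[0, Zbd]`. -/
structure RegularAssumptions (M : ElecModel S X0) (P Q : ℝ) : Prop where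
  deriv_C : ∀ s : S, ∀ A ∈ Set.Ici (0 : ℝ),
    HasDerivWithinAt (fun u => M.Cc u s) (M.dC A s) (Set.Ici 0) A
  deriv_H0 : ∀ s : S, ∀ A ∈ Set.Ici (0 : ℝ),
    HasDerivWithinAt (fun u => M.Hc0 u s) (M.dH0 A s) (Set.Ici 0) A
  deriv_H1 : ∀ (s s' : S) (A' : ℝ), ∀ A ∈ Set.Ici (0 : ℝ),
    HasDerivWithinAt (fun u => M.Hc u A' s s') (M.dH1 A A' s s') (Set.Ici 0) A
  deriv_H2 : ∀ (s s' : S) (A : ℝ), ∀ A' ∈ Set.Ici (0 : ℝ),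
    HasDerivWithinAt (fun u => M.Hc A u s s') (M.dH2 A A' s s') (Set.Ici 0) A'
  C_mono : ∀ s : S, MonotoneOn (fun u => M.Cc u s) (Set.Ici 0)
  bound_C : ∀ s : S, ∀ A ∈ Set.Ici (0 : ℝ), |M.dC A s| ≤ P
  bound_H0 : ∀ s : S, ∀ A ∈ Set.Ici (0 : ℝ), |M.dH0 A s| ≤ P
  bound_H1 : ∀ (s s' : S), ∀ A' ∈ Set.Icc (0 : ℝ) M.B, ∀ A ∈ Set.Ici (0 : ℝ),
    |M.dH1 A A' s s'| ≤ P
  bound_H2 : ∀ (s s' : S), ∀ A' ∈ Set.Icc (0 : ℝ) M.B, ∀ A ∈ Set.Ici (0 : ℝ),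
    |M.dH2 A' A s s'| ≤ P
  equicont_C : ∀ ε > (0 : ℝ), ∃ δ > (0 : ℝ), ∀ s : S, ∀ A ∈ Set.Ici (0 : ℝ),
    ∀ A2 ∈ Set.Ici (0 : ℝ), |A - A2| ≤ δ → |M.dC A s - M.dC A2 s| ≤ ε
  equicont_H0 : ∀ ε > (0 : ℝ), ∃ δ > (0 : ℝ), ∀ s : S, ∀ A ∈ Set.Ici (0 : ℝ),
    ∀ A2 ∈ Set.Ici (0 : ℝ), |A - A2| ≤ δ → |M.dH0 A s - M.dH0 A2 s| ≤ ε
  equicont_H1 : ∀ ε > (0 : ℝ), ∃ δ > (0 : ℝ), ∀ (s s' : S), ∀ A' ∈ Set.Icc (0 : ℝ) M.B,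
    ∀ A ∈ Set.Ici (0 : ℝ), ∀ A2 ∈ Set.Ici (0 : ℝ),
      |A - A2| ≤ δ → |M.dH1 A A' s s' - M.dH1 A2 A' s s'| ≤ ε
  equicont_H2 : ∀ ε > (0 : ℝ), ∃ δ > (0 : ℝ), ∀ (s s' : S), ∀ A' ∈ Set.Icc (0 : ℝ) M.B,
    ∀ A ∈ Set.Ici (0 : ℝ), ∀ A2 ∈ Set.Ici (0 : ℝ),
      |A - A2| ≤ δ → |M.dH2 A' A s s' - M.dH2 A' A2 s s'| ≤ ε
  U_bounds : ∀ (t : ℕ) (x : X0) (z : ℝ) (s : S) (a : ℝ), M.U t x z s a ∈ Set.Icc (0 : ℝ) Q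
  U_cont : ∀ (t : ℕ) (x : X0) (z : ℝ) (s : S), Continuous fun a => M.U t x z s a
  Zbd_nonneg : 0 ≤ M.Zbd
  r_mem : ∀ (x : X0) (z a : ℝ) (s' : S), z ∈ Set.Icc (0 : ℝ) M.Zbd →
    a ∈ Set.Icc (0 : ℝ) M.B → M.r x z a s' ∈ Set.Icc (0 : ℝ) M.Zbd

/-- Assumption 4 of the paper (convexity): convex costs, concave cumulative utility,
monotone internal-state maps with one-sided derivatives, and utilities with one-sided
derivatives in the internal state. -/
structure ConvexAssumptions (M : ElecModel S X0) : Prop where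
  C_convex : ∀ s : S, ConvexOn ℝ Set.univ (fun A => M.Cc A s)
  H_convex : ∀ s s' : S, ConvexOn ℝ Set.univ (fun p : ℝ × ℝ => M.Hc p.1 p.2 s s')
  cumU_concave : ∀ (x0 : X0) (h : ℕ → S),
    ConcaveOn ℝ {a : ℕ → ℝ | ∀ t, a t ∈ Set.Icc (0 : ℝ) M.B} (fun a => M.cumUtility x0 h a)
  k_monotone : ∀ (x0 : X0) (h : ℕ → S) (t τ : ℕ), τ < t → ∀ a : ℕ → ℝ,
    Monotone (fun u => M.zTraj x0 h (Function.update a τ u) t) ∨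
      Antitone (fun u => M.zTraj x0 h (Function.update a τ u) t)
  k_onesided : ∀ (x0 : X0) (h : ℕ → S) (t τ : ℕ) (a : ℕ → ℝ) (u : ℝ),
    (∃ d, HasDerivWithinAt (fun v => M.zTraj x0 h (Function.update a τ v) t) d (Set.Ici u) u) ∧
    (∃ d, HasDerivWithinAt (fun v => M.zTraj x0 h (Function.update a τ v) t) d (Set.Iic u) u)
  U_z_onesided : ∀ (t : ℕ) (x : X0) (s : S) (a z : ℝ),
    (∃ d, HasDerivWithinAt (fun z' => M.U t x z' s a) d (Set.Ici z) z) ∧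
    (∃ d, HasDerivWithinAt (fun z' => M.U t x z' s a) d (Set.Iic z) z)

end ElecModel

/-!
Fix the types `ω` of the other consumers. Everything consumer `i` observes is then a function
of the exogenous history, so any history-dependent strategy `κ` induces an oblivious strategy,
whose oblivious value is at most that of `ν` because `ν` is a DOE. The realised payoff differs
from the oblivious value only through the prices, which are the continuum marginal costs
evaluated at the per-capita demand instead of the continuum demand. The two demands differ by
`B / n` (consumer `i`) plus a centred sum of `n - 1` i.i.d. bounded terms divided by `n`, whose
expectation is `O(√n / n)`. Bounded, uniformly equicontinuous marginal costs are Lipschitz up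
to an arbitrary `ε`, so both `Vⁿ(κ) - Ṽ(κ)` and `Ṽ(ν) - Vⁿ(ν)` are `O(ε)` for large `n`.

The assumptions only give equicontinuity of `∂H/∂A` in its own argument. Continuity in the
other argument follows from the bound on the other partial derivative: `∂₁H(u, v) - ∂₁H(u, v')`
is the derivative of `H(·, v) - H(·, v')`, a function of size `P |v - v'|` whose derivative
oscillates little, and such a derivative is small by the mean value theorem.
-/

open Set Filter Topology

lemma le_add_div_mul_of_le_of_le {d ε C δ x : ℝ} (hδ : 0 < δ) (hε : 0 ≤ ε) (hC : 0 ≤ C)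
    (hx : 0 ≤ x) (hnear : x ≤ δ → d ≤ ε) (hfar : d ≤ C) : d ≤ ε + C / δ * x := by
  rcases le_or_gt x δ with hxδ | hxδ
  · linarith [hnear hxδ, mul_nonneg (div_nonneg hC hδ.le) hx]
  · have : C ≤ C / δ * x := by
      rw [div_mul_eq_mul_div, le_div_iff₀ hδ]
      exact mul_le_mul_of_nonneg_left hxδ.le hC
    linarith

lemma abs_le_add_of_hasDerivWithinAt_of_oscillation {F F' : ℝ → ℝ} {a b u ε δ C : ℝ}
    (hδ : 0 < δ) (hδab : δ ≤ b - a) (hu : u ∈ Icc a b)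
    (hF' : ∀ w ∈ Icc a b, HasDerivWithinAt F (F' w) (Icc a b) w)
    (hosc : ∀ w ∈ Icc a b, |w - u| ≤ δ → |F' w - F' u| ≤ ε)
    (hF : ∀ w ∈ Icc a b, |F w| ≤ C) :
    |F' u| ≤ ε + 2 * C / δ := by
  obtain ⟨c, hac, hcb, hcu, huc⟩ : ∃ c, a ≤ c ∧ c + δ ≤ b ∧ c ≤ u ∧ u ≤ c + δ := by
    rcases le_or_gt (u + δ) b with h | h
    · exact ⟨u, hu.1, h, le_rfl, by linarith⟩
    · exact ⟨b - δ, by linarith, by linarith, by linarith, by linarith [hu.2]⟩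
  have hsub : Icc c (c + δ) ⊆ Icc a b := Icc_subset_Icc hac hcb
  have hc : c ∈ Icc c (c + δ) := left_mem_Icc.2 (by linarith)
  have hcδ : c + δ ∈ Icc c (c + δ) := right_mem_Icc.2 (by linarith)
  -- mean value theorem for `w ↦ F w - F' u * w`, whose derivative is at most `ε` on `[c, c + δ]`
  have hmvt : |(F (c + δ) - F' u * (c + δ)) - (F c - F' u * c)| ≤ ε * δ := by
    have := Convex.norm_image_sub_le_of_norm_hasDerivWithin_le
      (f := fun w => F w - F' u * w) (f' := fun w => F' w - F' u) (C := ε) (fun w hw => ?_)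
      (fun w hw => ?_) (convex_Icc _ _) hc hcδ
    · simpa [Real.norm_eq_abs, abs_of_pos hδ] using this
    · have hlin := (hasDerivWithinAt_id w (Icc c (c + δ))).const_mul (F' u)
      rw [mul_one] at hlin
      exact ((hF' w (hsub hw)).mono hsub).sub hlin
    · exact (Real.norm_eq_abs _).trans_le
        (hosc w (hsub hw) (abs_le.2 ⟨by linarith [hw.1], by linarith [hw.2]⟩))
  have hFc := abs_le.1 (hF c (hsub hc))
  have hFd := abs_le.1 (hF (c + δ) (hsub hcδ))
  have hmvt' := abs_le.1 hmvt
  have hδu : |F' u| * δ ≤ ε * δ + 2 * C := by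
    rw [← abs_of_pos hδ, ← abs_mul, abs_of_pos hδ, abs_le]
    constructor <;> linarith
  rwa [show ε + 2 * C / δ = (ε * δ + 2 * C) / δ by field_simp, le_div_iff₀ hδ]

lemma abs_sub_le_of_cross_partial {H D₁ D₂ : ℝ → ℝ → ℝ} {a b δ ε P u v v' : ℝ}
    (hδ : 0 < δ) (hδab : δ ≤ b - a)
    (hD₁ : ∀ u ∈ Icc a b, ∀ v ∈ Icc a b, HasDerivWithinAt (H · v) (D₁ u v) (Icc a b) u)
    (hD₂ : ∀ u ∈ Icc a b, ∀ v ∈ Icc a b, HasDerivWithinAt (H u) (D₂ u v) (Icc a b) v)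
    (hD₂P : ∀ u ∈ Icc a b, ∀ v ∈ Icc a b, |D₂ u v| ≤ P)
    (hosc : ∀ v ∈ Icc a b, ∀ u ∈ Icc a b, ∀ u' ∈ Icc a b, |u - u'| ≤ δ →
      |D₁ u v - D₁ u' v| ≤ ε)
    (hu : u ∈ Icc a b) (hv : v ∈ Icc a b) (hv' : v' ∈ Icc a b) :
    |D₁ u v - D₁ u v'| ≤ 2 * ε + 2 * P / δ * |v - v'| := by
  refine (abs_le_add_of_hasDerivWithinAt_of_oscillation (F := fun w => H w v - H w v')
    (F' := fun w => D₁ w v - D₁ w v') (ε := 2 * ε) (C := P * |v - v'|) hδ hδab hu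
    (fun w hw => (hD₁ w hw v hv).sub (hD₁ w hw v' hv')) (fun w hw hwu => ?_)
    (fun w hw => ?_)).trans_eq (by ring)
  · calc |D₁ w v - D₁ w v' - (D₁ u v - D₁ u v')|
        = |(D₁ w v - D₁ u v) - (D₁ w v' - D₁ u v')| := by ring_nf
      _ ≤ ε + ε := (abs_sub _ _).trans
          (add_le_add (hosc v hv w hw u hu hwu) (hosc v' hv' w hw u hu hwu))
      _ = 2 * ε := by ring
  · simpa [Real.norm_eq_abs, abs_sub_comm] using
      Convex.norm_image_sub_le_of_norm_hasDerivWithin_le (hD₂ w hw)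
        (fun z hz => (Real.norm_eq_abs _).trans_le (hD₂P w hw z hz)) (convex_Icc a b) hv' hv

lemma abs_sub_le_of_partials {H D₁ D₂ : ℝ → ℝ → ℝ} {a b δ ε P g u u' v v' : ℝ}
    (hδ : 0 < δ) (hδab : δ ≤ b - a)
    (hD₁ : ∀ u ∈ Icc a b, ∀ v ∈ Icc a b, HasDerivWithinAt (H · v) (D₁ u v) (Icc a b) u)
    (hD₂ : ∀ u ∈ Icc a b, ∀ v ∈ Icc a b, HasDerivWithinAt (H u) (D₂ u v) (Icc a b) v)
    (hD₁P : ∀ u ∈ Icc a b, ∀ v ∈ Icc a b, |D₁ u v| ≤ P)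
    (hD₂P : ∀ u ∈ Icc a b, ∀ v ∈ Icc a b, |D₂ u v| ≤ P)
    (hosc : ∀ v ∈ Icc a b, ∀ u ∈ Icc a b, ∀ u' ∈ Icc a b, |u - u'| ≤ δ →
      |D₁ u v - D₁ u' v| ≤ ε)
    (hu : u ∈ Icc a b) (hu' : u' ∈ Icc a b) (hv : v ∈ Icc a b) (hv' : v' ∈ Icc a b)
    (hug : |u - u'| ≤ g) (hvg : |v - v'| ≤ g) :
    |D₁ u v - D₁ u' v'| ≤ 3 * ε + 4 * P / δ * g := by
  have hP : 0 ≤ P := (abs_nonneg _).trans (hD₁P u hu v hv)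
  have hε : 0 ≤ ε := (abs_nonneg _).trans (hosc v hv u hu u hu (by simpa using hδ.le))
  have hown : |D₁ u v - D₁ u' v| ≤ ε + 2 * P / δ * |u - u'| :=
    le_add_div_mul_of_le_of_le hδ hε (by positivity) (abs_nonneg _) (hosc v hv u hu u' hu')
      ((abs_sub _ _).trans (by linarith [hD₁P u hu v hv, hD₁P u' hu' v hv]))
  have hcross := abs_sub_le_of_cross_partial hδ hδab hD₁ hD₂ hD₂P hosc hu' hv hv'
  calc |D₁ u v - D₁ u' v'| ≤ |D₁ u v - D₁ u' v| + |D₁ u' v - D₁ u' v'| := abs_sub_le _ _ _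
    _ ≤ (ε + 2 * P / δ * g) + (2 * ε + 2 * P / δ * g) := by
        gcongr
        · exact hown.trans (by gcongr)
        · exact hcross.trans (by gcongr)
    _ = 3 * ε + 4 * P / δ * g := by ring

section ProbabilityWeights

variable {ι : Type*} [Fintype ι] {w : ι → ℝ}

lemma sum_mul_const_of_sum_eq_one (hw : ∑ i, w i = 1) (c : ℝ) : ∑ i, w i * c = c := by
  rw [← Finset.sum_mul, hw, one_mul]

lemma abs_sum_mul_le_of_abs_le (hw0 : ∀ i, 0 ≤ w i) (hw1 : ∑ i, w i = 1) {F : ι → ℝ} {C : ℝ}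
    (hF : ∀ i, |F i| ≤ C) : |∑ i, w i * F i| ≤ C := by
  calc |∑ i, w i * F i| ≤ ∑ i, w i * C := (Finset.abs_sum_le_sum_abs _ _).trans
        (Finset.sum_le_sum fun i _ => by
          rw [abs_mul, abs_of_nonneg (hw0 i)]
          exact mul_le_mul_of_nonneg_left (hF i) (hw0 i))
    _ = C := sum_mul_const_of_sum_eq_one hw1 C

end ProbabilityWeights

section IIDSums

variable {α : Type*} [Fintype α] {p : α → ℝ}

lemma sum_prod_eq_one (hp : ∑ x, p x = 1) (m : ℕ) : ∑ ω : Fin m → α, ∏ j, p (ω j) = 1 := by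
  rw [← Fintype.prod_sum (fun (_ : Fin m) x => p x)]
  simp [hp]

lemma sum_prod_mul_sq_sum_eq (hp : ∑ x, p x = 1) {Y : α → ℝ} (hmean : ∑ x, p x * Y x = 0)
    (m : ℕ) :
    ∑ ω : Fin m → α, (∏ j, p (ω j)) * (∑ j, Y (ω j)) ^ 2 = m * ∑ x, p x * Y x ^ 2 := by
  -- independence: the expectation of a product of functions of distinct coordinates factors
  have hfactor : ∀ j k : Fin m, ∑ ω : Fin m → α, (∏ i, p (ω i)) * (Y (ω j) * Y (ω k)) =
      ∏ i, ∑ x, p x * ((if i = j then Y x else 1) * (if i = k then Y x else 1)) := by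
    intro j k
    rw [Fintype.prod_sum]
    refine Finset.sum_congr rfl fun ω _ => ?_
    rw [Finset.prod_mul_distrib, Finset.prod_mul_distrib, Finset.prod_ite_eq' Finset.univ j,
      Finset.prod_ite_eq' Finset.univ k]
    simp
  have hcov : ∀ j k : Fin m, ∑ ω : Fin m → α, (∏ i, p (ω i)) * (Y (ω j) * Y (ω k)) =
      if j = k then ∑ x, p x * Y x ^ 2 else 0 := by
    intro j k
    rw [hfactor]
    split_ifs with hjk
    · subst hjk
      rw [Finset.prod_eq_single j (fun i _ hij => by simp [hij, hp]) (by simp)]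
      simp [sq]
    · exact Finset.prod_eq_zero (Finset.mem_univ k) (by simp [Ne.symm hjk, hmean])
  calc ∑ ω : Fin m → α, (∏ j, p (ω j)) * (∑ j, Y (ω j)) ^ 2
      = ∑ j, ∑ k, ∑ ω : Fin m → α, (∏ i, p (ω i)) * (Y (ω j) * Y (ω k)) := by
        simp_rw [sq, Finset.sum_mul_sum, Finset.mul_sum]
        rw [Finset.sum_comm]
        exact Finset.sum_congr rfl fun j _ => Finset.sum_comm
    _ = m * ∑ x, p x * Y x ^ 2 := by simp [hcov]

lemma sum_prod_mul_abs_sum_le (hp0 : ∀ x, 0 ≤ p x) (hp1 : ∑ x, p x = 1) {Y : α → ℝ}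
    (hmean : ∑ x, p x * Y x = 0) {b : ℝ} (hb : ∀ x, |Y x| ≤ b) (m : ℕ) :
    ∑ ω : Fin m → α, (∏ j, p (ω j)) * |∑ j, Y (ω j)| ≤ b * √m := by
  obtain ⟨x, -⟩ := Finset.nonempty_of_sum_ne_zero (hp1.trans_ne one_ne_zero)
  have hb0 : 0 ≤ b := (abs_nonneg _).trans (hb x)
  have hπ : ∀ ω : Fin m → α, 0 ≤ ∏ j, p (ω j) := fun ω => Finset.prod_nonneg fun j _ => hp0 _
  -- Cauchy–Schwarz against the second moment
  have hCS : (∑ ω : Fin m → α, (∏ j, p (ω j)) * |∑ j, Y (ω j)|) ^ 2 ≤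
      (∑ ω : Fin m → α, ∏ j, p (ω j)) * ∑ ω : Fin m → α, (∏ j, p (ω j)) * (∑ j, Y (ω j)) ^ 2 :=
    Finset.sum_sq_le_sum_mul_sum_of_sq_le_mul _ (fun ω _ => hπ ω)
      (fun ω _ => mul_nonneg (hπ ω) (sq_nonneg _))
      (fun ω _ => le_of_eq (by rw [mul_pow, sq_abs]; ring))
  rw [sum_prod_eq_one hp1, one_mul, sum_prod_mul_sq_sum_eq hp1 hmean] at hCS
  have hvar : ∑ x, p x * Y x ^ 2 ≤ b ^ 2 :=
    (Finset.sum_le_sum fun x _ => mul_le_mul_of_nonneg_left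
      (sq_abs (Y x) ▸ pow_le_pow_left₀ (abs_nonneg _) (hb x) 2) (hp0 x)).trans_eq
      (sum_mul_const_of_sum_eq_one hp1 _)
  calc _ ≤ √(m * b ^ 2) := (le_abs_self _).trans (Real.abs_le_sqrt (hCS.trans (by gcongr)))
    _ = b * √m := by rw [Real.sqrt_mul (Nat.cast_nonneg _), Real.sqrt_sq hb0, mul_comm]

end IIDSums

lemma sum_markov_path_prob_eq_one {S : Type*} [Fintype S] [DecidableEq S] (K : S → S → ℝ)
    (hK : ∀ s, ∑ s', K s s' = 1) (s0 : S) : ∀ k : ℕ,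
    ∑ g : Fin (k + 1) → S,
      (if g 0 = s0 then (1 : ℝ) else 0) * ∏ t : Fin k, K (g t.castSucc) (g t.succ) = 1
  | 0 => by simp [← (Equiv.funUnique (Fin 1) S).symm.sum_comp]
  | k + 1 => by
    rw [← (Fin.snocEquiv fun _ => S).sum_comp, Fintype.sum_prod_type_right]
    simp only [Fin.snocEquiv_apply, Fin.snoc_apply_zero, Fin.prod_univ_castSucc, Fin.succ_last,
      Fin.succ_castSucc, Fin.snoc_castSucc, Fin.snoc_last, ← Finset.mul_sum, hK, mul_one]
    exact sum_markov_path_prob_eq_one K hK s0 k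

lemma tendsto_one_add_sqrt_div_succ :
    Tendsto (fun m : ℕ => (1 + √m) / (m + 1)) atTop (𝓝 0) := by
  have hsqrt : Tendsto (fun m : ℕ => √((m : ℝ) + 1)) atTop atTop :=
    Real.tendsto_sqrt_atTop.comp (tendsto_atTop_add_const_right _ 1 tendsto_natCast_atTop_atTop)
  refine squeeze_zero (fun m => by positivity) (fun m => ?_)
    ((tendsto_const_nhds (x := (2 : ℝ))).div_atTop hsqrt)
  -- `1 + √m ≤ 2 √(m + 1)` and `m + 1 = √(m + 1) ^ 2`
  have h1 : 1 ≤ √((m : ℝ) + 1) := Real.one_le_sqrt.2 (by linarith [m.cast_nonneg (α := ℝ)])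
  have h2 : √(m : ℝ) ≤ √((m : ℝ) + 1) := Real.sqrt_le_sqrt (by linarith)
  have h3 : √((m : ℝ) + 1) ^ 2 = m + 1 := Real.sq_sqrt (by positivity)
  rw [div_le_div_iff₀ (by positivity) (by positivity)]
  nlinarith

lemma limsup_nonpos_of_eventually_le {u : ℕ → ℝ} (hu : IsCoboundedUnder (· ≤ ·) atTop u)
    (h : ∀ ε > 0, ∀ᶠ n in atTop, u n ≤ ε) : limsup u atTop ≤ 0 :=
  le_of_forall_pos_le_add fun ε hε => by simpa using limsup_le_of_le hu (h ε hε)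

namespace ElecModel

variable {S X0 : Type*} [Fintype S] [DecidableEq S] [Fintype X0] (M : ElecModel S X0)

lemma histProb_nonneg (s0 : S) (h : ℕ → S) : 0 ≤ M.histProb s0 h :=
  mul_nonneg (by split_ifs <;> norm_num) (Finset.prod_nonneg fun _ _ => M.K_nonneg _ _)

lemma extendHist_apply (g : Fin (M.T + 1) → S) (t : Fin (M.T + 1)) :
    M.extendHist g t = g t :=
  congrArg g (Fin.ext (min_eq_left (Nat.lt_succ_iff.1 t.isLt)))

lemma sum_histProb_extendHist (s0 : S) :
    ∑ g : Fin (M.T + 1) → S, M.histProb s0 (M.extendHist g) = 1 := by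
  rw [← sum_markov_path_prob_eq_one M.K M.K_sum s0 M.T]
  refine Finset.sum_congr rfl fun g _ => ?_
  rw [histProb, ← Fin.prod_univ_eq_prod_range
    (fun i => M.K (M.extendHist g i) (M.extendHist g (i + 1)))]
  congr 1
  exact Finset.prod_congr rfl fun i _ =>
    congrArg₂ M.K (M.extendHist_apply g i.castSucc) (M.extendHist_apply g i.succ)

lemma expectHist_mono (s0 : S) {F G : (ℕ → S) → ℝ} (hFG : ∀ h, F h ≤ G h) :
    M.expectHist s0 F ≤ M.expectHist s0 G :=
  Finset.sum_le_sum fun _ _ => mul_le_mul_of_nonneg_left (hFG _) (M.histProb_nonneg _ _)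

lemma expectHist_const (s0 : S) (c : ℝ) : M.expectHist s0 (fun _ => c) = c :=
  sum_mul_const_of_sum_eq_one (M.sum_histProb_extendHist s0) c

lemma expectHist_add (s0 : S) (F G : (ℕ → S) → ℝ) :
    M.expectHist s0 (fun h => F h + G h) = M.expectHist s0 F + M.expectHist s0 G := by
  simp only [expectHist, mul_add, Finset.sum_add_distrib]

lemma expectHist_sub (s0 : S) (F G : (ℕ → S) → ℝ) :
    M.expectHist s0 (fun h => F h - G h) = M.expectHist s0 F - M.expectHist s0 G := by
  simp only [expectHist, mul_sub, Finset.sum_sub_distrib]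

lemma abs_expectHist_le (s0 : S) {F : (ℕ → S) → ℝ} {C : ℝ} (hF : ∀ h, |F h| ≤ C) :
    |M.expectHist s0 F| ≤ C :=
  abs_sum_mul_le_of_abs_le (fun _ => M.histProb_nonneg _ _) (M.sum_histProb_extendHist s0)
    fun _ => hF _

lemma sum_mul_expectHist_comm {ι : Type*} [Fintype ι] (s0 : S) (w : ι → ℝ)
    (F : ι → (ℕ → S) → ℝ) :
    ∑ i, w i * M.expectHist s0 (F i) = M.expectHist s0 (fun h => ∑ i, w i * F i h) := by
  simp only [expectHist, Finset.mul_sum]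
  rw [Finset.sum_comm]
  exact Finset.sum_congr rfl fun _ _ => Finset.sum_congr rfl fun _ _ => by ring

lemma zTraj_congr (x : X0) {h h' : ℕ → S} {a a' : ℕ → ℝ} :
    ∀ t, (∀ τ ≤ t, h τ = h' τ) → (∀ τ < t, a τ = a' τ) → M.zTraj x h a t = M.zTraj x h' a' t
  | 0, _, _ => rfl
  | t + 1, hh, ha => by
    simp only [zTraj]
    rw [zTraj_congr x t (fun τ hτ => hh τ (by omega)) (fun τ hτ => ha τ (by omega)),
      ha t t.lt_succ_self, hh (t + 1) le_rfl]

lemma zTraj_act_congr (ν : OblStrategy M) (x : X0) {h h' : ℕ → S} (t : ℕ)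
    (hh : ∀ τ ≤ t, h τ = h' τ) :
    M.zTraj x h (fun τ => ν.act τ x h) t = M.zTraj x h' (fun τ => ν.act τ x h') t :=
  M.zTraj_congr x t hh fun τ hτ => ν.act_prefix τ x h h' fun σ hσ => hh σ (by omega)

lemma prevActObl_congr (ν : OblStrategy M) (x : X0) {h h' : ℕ → S} :
    ∀ t, (∀ τ ≤ t, h τ = h' τ) → M.prevActObl ν x h t = M.prevActObl ν x h' t
  | 0, _ => rfl
  | t + 1, hh => ν.act_prefix t x h h' fun τ hτ => hh τ (by omega)

lemma othersAug_congr (m : ℕ) (ν : OblStrategy M) (ω : Fin m → X0) {h h' : ℕ → S} (t : ℕ)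
    (hh : ∀ τ ≤ t, h τ = h' τ) : M.othersAug m ν ω h t = M.othersAug m ν ω h' t := by
  simp only [othersAug, M.prevActObl_congr ν _ t hh, M.zTraj_act_congr ν _ t hh]

lemma iTraj_congr (m : ℕ) (κ : HistStrategy M) (ν : OblStrategy M) (x0 : X0)
    (ω : Fin m → X0) {h h' : ℕ → S} :
    ∀ t, (∀ τ ≤ t, h τ = h' τ) → M.iTraj m κ ν x0 ω h t = M.iTraj m κ ν x0 ω h' t
  | 0, hh => by
    simp only [iTraj, M.othersAug_congr m ν ω 0 hh, κ.act_prefix 0 _ h h' _ hh]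
  | t + 1, hh => by
    simp only [iTraj]
    rw [iTraj_congr m κ ν x0 ω t fun τ hτ => hh τ (by omega), hh (t + 1) le_rfl,
      M.othersAug_congr m ν ω (t + 1) hh, κ.act_prefix (t + 1) _ h h' _ hh]

lemma iTraj_fst_mem (m : ℕ) (κ : HistStrategy M) (ν : OblStrategy M) (x0 : X0)
    (ω : Fin m → X0) (h : ℕ → S) : ∀ t, (M.iTraj m κ ν x0 ω h t).1 ∈ Icc 0 M.B
  | 0 => κ.act_mem _ _ _ _
  | _ + 1 => κ.act_mem _ _ _ _

lemma iTraj_snd (m : ℕ) (κ : HistStrategy M) (ν : OblStrategy M) (x0 : X0)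
    (ω : Fin m → X0) (h : ℕ → S) :
    ∀ t, (M.iTraj m κ ν x0 ω h t).2 = M.zTraj x0 h (fun τ => (M.iTraj m κ ν x0 ω h τ).1) t
  | 0 => rfl
  | t + 1 => by
    simp only [iTraj, zTraj]
    rw [← iTraj_snd m κ ν x0 ω h t]

lemma iTraj_toHist (m : ℕ) (ν : OblStrategy M) (x0 : X0) (ω : Fin m → X0) (h : ℕ → S) :
    ∀ t, M.iTraj m ν.toHist ν x0 ω h t = (ν.act t x0 h, M.zTraj x0 h (fun τ => ν.act τ x0 h) t)
  | 0 => rfl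
  | t + 1 => by
    simp only [iTraj, zTraj]
    rw [iTraj_toHist m ν x0 ω h t]
    rfl

def inducedObl (m : ℕ) (κ : HistStrategy M) (ν : OblStrategy M) (x0 : X0)
    (ω : Fin m → X0) : OblStrategy M where
  act t _ h := (M.iTraj m κ ν x0 ω h t).1
  act_mem t _ h := M.iTraj_fst_mem m κ ν x0 ω h t
  act_prefix t _ _ _ hh := congrArg Prod.fst (M.iTraj_congr m κ ν x0 ω t hh)

lemma oblStageSum_inducedObl_toHist (m : ℕ) (ν : OblStrategy M) (s0 : S) (x0 : X0)
    (ω : Fin m → X0) (h : ℕ → S) :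
    M.oblStageSum (M.inducedObl m ν.toHist ν x0 ω) ν s0 x0 h = M.oblStageSum ν ν s0 x0 h := by
  simp only [oblStageSum, inducedObl, M.iTraj_toHist]

lemma avgDemand_mem (ν : OblStrategy M) (s0 : S) (h : ℕ → S) (t : ℕ) :
    M.avgDemand ν s0 h t ∈ Icc 0 M.B :=
  ⟨Finset.sum_nonneg fun x _ => mul_nonneg (M.eta_nonneg _ _) (ν.act_mem t x h).1,
    (Finset.sum_le_sum fun x _ => mul_le_mul_of_nonneg_left (ν.act_mem t x h).2
      (M.eta_nonneg _ _)).trans_eq (sum_mul_const_of_sum_eq_one (M.eta_sum s0) M.B)⟩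

lemma aggDemandN_div_mem (m : ℕ) (κ : HistStrategy M) (ν : OblStrategy M) (x0 : X0)
    (ω : Fin m → X0) (h : ℕ → S) (t : ℕ) :
    M.aggDemandN m κ ν x0 ω h t / (m + 1) ∈ Icc 0 M.B := by
  have ha := M.iTraj_fst_mem m κ ν x0 ω h t
  have hsum : ∑ j, ν.act t (ω j) h ≤ m * M.B := by
    simpa using Finset.sum_le_sum fun j (_ : j ∈ Finset.univ) => (ν.act_mem t (ω j) h).2
  refine ⟨div_nonneg (add_nonneg ha.1 (Finset.sum_nonneg fun j _ => (ν.act_mem t (ω j) h).1))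
    (by positivity), (div_le_iff₀ (by positivity)).2 ?_⟩
  rw [aggDemandN]
  linarith [ha.2]

lemma abs_aggDemandN_div_sub_avgDemand_le (m : ℕ) (κ : HistStrategy M) (ν : OblStrategy M)
    (x0 : X0) (s0 : S) (ω : Fin m → X0) (h : ℕ → S) (t : ℕ) :
    |M.aggDemandN m κ ν x0 ω h t / (m + 1) - M.avgDemand ν s0 h t|
      ≤ (M.B + |∑ j, (ν.act t (ω j) h - M.avgDemand ν s0 h t)|) / (m + 1) := by
  have ha := M.iTraj_fst_mem m κ ν x0 ω h t
  have hA := M.avgDemand_mem ν s0 h t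
  have hsplit : M.aggDemandN m κ ν x0 ω h t / (m + 1) - M.avgDemand ν s0 h t
      = ((M.iTraj m κ ν x0 ω h t).1 - M.avgDemand ν s0 h t
        + ∑ j, (ν.act t (ω j) h - M.avgDemand ν s0 h t)) / (m + 1) := by
    simp only [aggDemandN, Finset.sum_sub_distrib, Finset.sum_const, Finset.card_univ,
      Fintype.card_fin, nsmul_eq_mul]
    field_simp
    ring
  rw [hsplit, abs_div, abs_of_pos (by positivity : (0 : ℝ) < m + 1)]
  gcongr
  exact (abs_add_le _ _).trans
    (add_le_add_left (abs_sub_le_of_nonneg_of_le ha.1 ha.2 hA.1 hA.2) _)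

/-- The per-stage bounds of `abs_aggDemandN_div_sub_avgDemand_le`, summed over the stages so
as to bound the demand deviation at every stage at once. -/
def demandFluct (ν : OblStrategy M) (s0 : S) (m : ℕ) (ω : Fin m → X0) (h : ℕ → S) : ℝ :=
  ∑ t ∈ Finset.range (M.T + 1),
    (M.B + |∑ j, (ν.act t (ω j) h - M.avgDemand ν s0 h t)|) / (m + 1)

lemma abs_aggDemandN_div_sub_avgDemand_le_demandFluct (m : ℕ) (κ : HistStrategy M)
    (ν : OblStrategy M) (x0 : X0) (s0 : S) (ω : Fin m → X0) (h : ℕ → S) {t : ℕ}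
    (ht : t ≤ M.T) :
    |M.aggDemandN m κ ν x0 ω h t / (m + 1) - M.avgDemand ν s0 h t|
      ≤ M.demandFluct ν s0 m ω h :=
  (M.abs_aggDemandN_div_sub_avgDemand_le m κ ν x0 s0 ω h t).trans <|
    Finset.single_le_sum (f := fun t => (M.B + |∑ j, (ν.act t (ω j) h - M.avgDemand ν s0 h t)|)
      / (m + 1)) (fun _ _ => by have := M.B_pos; positivity)
      (Finset.mem_range.2 (Nat.lt_succ_of_le ht))

lemma sum_prod_mul_demandFluct_le (ν : OblStrategy M) (s0 : S) (m : ℕ) (h : ℕ → S) :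
    ∑ ω : Fin m → X0, (∏ j, M.eta s0 (ω j)) * M.demandFluct ν s0 m ω h
      ≤ (M.T + 1) * (M.B * (1 + √m) / (m + 1)) := by
  have hstage : ∀ t, ∑ ω : Fin m → X0, (∏ j, M.eta s0 (ω j)) *
      ((M.B + |∑ j, (ν.act t (ω j) h - M.avgDemand ν s0 h t)|) / (m + 1))
        ≤ M.B * (1 + √m) / (m + 1) := by
    intro t
    have hmean : ∑ x, M.eta s0 x * (ν.act t x h - M.avgDemand ν s0 h t) = 0 := by
      simp only [mul_sub, Finset.sum_sub_distrib, sum_mul_const_of_sum_eq_one (M.eta_sum s0)]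
      exact sub_self _
    have hdev := sum_prod_mul_abs_sum_le (M.eta_nonneg s0) (M.eta_sum s0) hmean
      (fun x => abs_sub_le_of_nonneg_of_le (ν.act_mem t x h).1 (ν.act_mem t x h).2
        (M.avgDemand_mem ν s0 h t).1 (M.avgDemand_mem ν s0 h t).2) m
    simp only [mul_div_assoc', ← Finset.sum_div, mul_add, Finset.sum_add_distrib,
      sum_mul_const_of_sum_eq_one (sum_prod_eq_one (M.eta_sum s0) m)]
    gcongr
    linarith
  calc ∑ ω : Fin m → X0, (∏ j, M.eta s0 (ω j)) * M.demandFluct ν s0 m ω h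
      = ∑ t ∈ Finset.range (M.T + 1), ∑ ω : Fin m → X0, (∏ j, M.eta s0 (ω j)) *
          ((M.B + |∑ j, (ν.act t (ω j) h - M.avgDemand ν s0 h t)|) / (m + 1)) := by
        simp only [demandFluct, Finset.mul_sum]
        exact Finset.sum_comm
    _ ≤ ∑ _t ∈ Finset.range (M.T + 1), M.B * (1 + √m) / (m + 1) :=
        Finset.sum_le_sum fun t _ => hstage t
    _ = (M.T + 1) * (M.B * (1 + √m) / (m + 1)) := by simp

lemma RegularAssumptions.P_nonneg [Nonempty S] {P Q : ℝ} (hreg : M.RegularAssumptions P Q) :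
    0 ≤ P :=
  (abs_nonneg _).trans (hreg.bound_C (Classical.arbitrary S) 0 (mem_Ici.2 le_rfl))

def PricesApproxLipschitz (ε K : ℝ) : Prop :=
  ∀ s s' : S, ∀ u ∈ Icc 0 M.B, ∀ u' ∈ Icc 0 M.B, ∀ v ∈ Icc 0 M.B, ∀ v' ∈ Icc 0 M.B,
    ∀ g : ℝ, |u - u'| ≤ g → |v - v'| ≤ g →
      |M.dC u s - M.dC u' s| ≤ ε + K * g ∧ |M.dH0 u s - M.dH0 u' s| ≤ ε + K * g ∧
      |M.dH1 u v s s' - M.dH1 u' v' s s'| ≤ ε + K * g ∧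
      |M.dH2 u v s s' - M.dH2 u' v' s s'| ≤ ε + K * g

lemma exists_pricesApproxLipschitz [Nonempty S] {P Q : ℝ} (hreg : M.RegularAssumptions P Q)
    {ε : ℝ} (hε : 0 < ε) : ∃ K, 0 ≤ K ∧ M.PricesApproxLipschitz ε K := by
  have hP := hreg.P_nonneg
  have hB := M.B_pos
  obtain ⟨δC, hδC, hC⟩ := hreg.equicont_C (ε / 3) (by positivity)
  obtain ⟨δ0, hδ0, h0⟩ := hreg.equicont_H0 (ε / 3) (by positivity)
  obtain ⟨δ1, hδ1, h1⟩ := hreg.equicont_H1 (ε / 3) (by positivity)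
  obtain ⟨δ2, hδ2, h2⟩ := hreg.equicont_H2 (ε / 3) (by positivity)
  set δ := min (min δC δ0) (min (min δ1 δ2) M.B) with hδdef
  have hδ : 0 < δ := by positivity
  have hδle : δ ≤ δC ∧ δ ≤ δ0 ∧ δ ≤ δ1 ∧ δ ≤ δ2 ∧ δ ≤ M.B - 0 := by
    simp only [hδdef, sub_zero, min_le_iff, le_refl, true_or, or_true, and_self]
  have hI : Icc 0 M.B ⊆ Ici 0 := Icc_subset_Ici_self
  refine ⟨4 * P / δ, by positivity, fun s s' u hu u' hu' v hv v' hv' g hug hvg => ?_⟩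
  have hK : (P + P) / δ * |u - u'| ≤ 4 * P / δ * g :=
    mul_le_mul (div_le_div_of_nonneg_right (by linarith) hδ.le) hug (abs_nonneg _)
      (by positivity)
  refine ⟨?_, ?_, ?_, ?_⟩
  · have := le_add_div_mul_of_le_of_le (C := P + P) hδ (by positivity) (by positivity)
      (abs_nonneg (u - u')) (fun hnear => hC s u hu.1 u' hu'.1 (hnear.trans hδle.1))
      ((abs_sub _ _).trans (add_le_add (hreg.bound_C s u hu.1) (hreg.bound_C s u' hu'.1)))
    linarith
  · have := le_add_div_mul_of_le_of_le (C := P + P) hδ (by positivity) (by positivity)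
      (abs_nonneg (u - u')) (fun hnear => h0 s u hu.1 u' hu'.1 (hnear.trans hδle.2.1))
      ((abs_sub _ _).trans (add_le_add (hreg.bound_H0 s u hu.1) (hreg.bound_H0 s u' hu'.1)))
    linarith
  · have := abs_sub_le_of_partials (H := fun u v => M.Hc u v s s') hδ hδle.2.2.2.2
      (fun u hu v _ => (hreg.deriv_H1 s s' v u hu.1).mono hI)
      (fun u _ v hv => (hreg.deriv_H2 s s' u v hv.1).mono hI)
      (fun u hu v hv => hreg.bound_H1 s s' v hv u hu.1)
      (fun u hu v hv => hreg.bound_H2 s s' u hu v hv.1)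
      (fun v hv u hu u' hu' hδu => h1 s s' v hv u hu.1 u' hu'.1 (hδu.trans hδle.2.2.1))
      hu hu' hv hv' hug hvg
    linarith
  · -- the roles of the two demand arguments are swapped
    have := abs_sub_le_of_partials (H := fun v u => M.Hc u v s s')
      (D₁ := fun v u => M.dH2 u v s s') (D₂ := fun v u => M.dH1 u v s s') hδ hδle.2.2.2.2
      (fun v hv u _ => (hreg.deriv_H2 s s' u v hv.1).mono hI)
      (fun v hv u hu => (hreg.deriv_H1 s s' v u hu.1).mono hI)
      (fun v hv u hu => hreg.bound_H2 s s' u hu v hv.1)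
      (fun v hv u hu => hreg.bound_H1 s s' v hv u hu.1)
      (fun u hu v hv v' hv' hδv => h2 s s' u hu v hv.1 v' hv'.1 (hδv.trans hδle.2.2.2.1))
      hv hv' hu hu' hvg hug
    linarith

lemma abs_prices_sub_le {ε K : ℝ} (hL : M.PricesApproxLipschitz ε K) (m : ℕ)
    (κ : HistStrategy M) (ν : OblStrategy M) (x0 : X0) (s0 : S) (ω : Fin m → X0) (h : ℕ → S)
    {t : ℕ} (ht : t ≤ M.T) :
    |M.pTil ν s0 h t - M.pN m κ ν x0 ω h t| ≤ ε + K * M.demandFluct ν s0 m ω h ∧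
    |M.wTil ν s0 h t - M.wN m κ ν x0 ω h t| ≤ ε + K * M.demandFluct ν s0 m ω h ∧
    |M.qTil ν s0 h t - M.qN m κ ν x0 ω h t| ≤ ε + K * M.demandFluct ν s0 m ω h := by
  have hdev : ∀ τ ≤ M.T, |M.avgDemand ν s0 h τ - M.aggDemandN m κ ν x0 ω h τ / (m + 1)|
      ≤ M.demandFluct ν s0 m ω h := fun τ hτ =>
    abs_sub_comm (M.aggDemandN m κ ν x0 ω h τ / (m + 1)) _ ▸
      M.abs_aggDemandN_div_sub_avgDemand_le_demandFluct m κ ν x0 s0 ω h hτ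
  have hL' := fun τ τ' (hτ : τ ≤ M.T) (hτ' : τ' ≤ M.T) =>
    hL (h τ) (h τ') _ (M.avgDemand_mem ν s0 h τ) _ (M.aggDemandN_div_mem m κ ν x0 ω h τ)
      _ (M.avgDemand_mem ν s0 h τ') _ (M.aggDemandN_div_mem m κ ν x0 ω h τ') _
      (hdev τ hτ) (hdev τ' hτ')
  have hp := (hL' t t ht ht).1
  refine ⟨hp, ?_, ?_⟩
  · cases t with
    | zero => exact (hL' 0 0 ht ht).2.1
    | succ t => exact (hL' t (t + 1) (by omega) ht).2.2.2
  · cases t with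
    | zero => simpa [qTil, qN] using (abs_nonneg _).trans hp
    | succ t => exact (hL' t (t + 1) (by omega) ht).2.2.1

lemma abs_iPayoff_sub_oblStageSum_le {ε K : ℝ} (hL : M.PricesApproxLipschitz ε K) (m : ℕ)
    (κ : HistStrategy M) (ν : OblStrategy M) (x0 : X0) (s0 : S) (ω : Fin m → X0)
    (h : ℕ → S) :
    |M.iPayoff m κ ν x0 ω h - M.oblStageSum (M.inducedObl m κ ν x0 ω) ν s0 x0 h|
      ≤ 3 * M.B * (M.T + 1) * (ε + K * M.demandFluct ν s0 m ω h) := by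
  set e := ε + K * M.demandFluct ν s0 m ω h
  set a := fun t => (M.iTraj m κ ν x0 ω h t).1
  have ha : ∀ t, |a t| ≤ M.B := fun t =>
    abs_le.2 ⟨by linarith [(M.iTraj_fst_mem m κ ν x0 ω h t).1, M.B_pos],
      (M.iTraj_fst_mem m κ ν x0 ω h t).2⟩
  have hprev : ∀ t, |if t = 0 then (0 : ℝ) else a (t - 1)| ≤ M.B := fun t => by
    split_ifs
    · simpa using M.B_pos.le
    · exact ha _
  -- only the prices differ: the utility terms agree since `iTraj` tracks the internal state
  have hdiff : M.iPayoff m κ ν x0 ω h - M.oblStageSum (M.inducedObl m κ ν x0 ω) ν s0 x0 h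
      = ∑ t ∈ Finset.range (M.T + 1),
          (((M.pTil ν s0 h t - M.pN m κ ν x0 ω h t) + (M.wTil ν s0 h t - M.wN m κ ν x0 ω h t))
              * a t
            + (M.qTil ν s0 h t - M.qN m κ ν x0 ω h t) * (if t = 0 then 0 else a (t - 1))) := by
    simp only [iPayoff, oblStageSum, inducedObl, ← Finset.sum_sub_distrib, ← M.iTraj_snd]
    exact Finset.sum_congr rfl fun t _ => by ring
  rw [hdiff]
  calc _ ≤ ∑ _t ∈ Finset.range (M.T + 1), 3 * M.B * e := by
        refine (Finset.abs_sum_le_sum_abs _ _).trans (Finset.sum_le_sum fun t ht => ?_)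
        obtain ⟨hp, hw, hq⟩ := M.abs_prices_sub_le hL m κ ν x0 s0 ω h
          (Nat.lt_succ_iff.1 (Finset.mem_range.1 ht))
        have he : 0 ≤ e := (abs_nonneg _).trans hp
        calc _ ≤ (e + e) * M.B + e * M.B := by
              refine (abs_add_le _ _).trans ?_
              rw [abs_mul, abs_mul]
              exact add_le_add (mul_le_mul ((abs_add_le _ _).trans (add_le_add hp hw)) (ha t)
                (abs_nonneg _) (by positivity)) (mul_le_mul hq (hprev t) (abs_nonneg _) he)
          _ = 3 * M.B * e := by ring
    _ = 3 * M.B * (M.T + 1) * e := by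
        rw [Finset.sum_const, Finset.card_range, nsmul_eq_mul]
        push_cast
        ring

lemma Vn_sub_le {ε K : ℝ} (hK : 0 ≤ K) (hL : M.PricesApproxLipschitz ε K)
    (ν : OblStrategy M) (hDOE : M.IsDOE ν) (s0 : S) (x0 : X0) (m : ℕ) (κ : HistStrategy M) :
    M.Vn m κ ν x0 s0 - M.Vn m ν.toHist ν x0 s0
      ≤ 6 * M.B * (M.T + 1) * (ε + K * ((M.T + 1) * (M.B * (1 + √m) / (m + 1)))) := by
  set π := fun ω : Fin m → X0 => ∏ j, M.eta s0 (ω j)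
  set err := fun ω h => 6 * M.B * (M.T + 1) * (ε + K * M.demandFluct ν s0 m ω h)
  have hπ : ∀ ω, 0 ≤ π ω := fun ω => Finset.prod_nonneg fun j _ => M.eta_nonneg _ _
  have hgap := M.abs_iPayoff_sub_oblStageSum_le hL m
  -- for fixed types of the others, the deviation gains at most the price error: `ν` is a DOE
  have hω : ∀ ω, M.expectHist s0 (M.iPayoff m κ ν x0 ω) -
      M.expectHist s0 (M.iPayoff m ν.toHist ν x0 ω) ≤ M.expectHist s0 (err ω) := by
    intro ω
    have hpt : ∀ h, M.iPayoff m κ ν x0 ω h - M.iPayoff m ν.toHist ν x0 ω h ≤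
        (M.oblStageSum (M.inducedObl m κ ν x0 ω) ν s0 x0 h - M.oblStageSum ν ν s0 x0 h)
          + err ω h := by
      intro h
      have h1 := (abs_le.1 (hgap κ ν x0 s0 ω h)).2
      have h2 := (abs_le.1 (hgap ν.toHist ν x0 s0 ω h)).1
      rw [M.oblStageSum_inducedObl_toHist] at h2
      simp only [err]
      linarith
    have := M.expectHist_mono s0 hpt
    rw [M.expectHist_sub, M.expectHist_add, M.expectHist_sub] at this
    have hdoe : M.expectHist s0 (M.oblStageSum (M.inducedObl m κ ν x0 ω) ν s0 x0)
        ≤ M.expectHist s0 (M.oblStageSum ν ν s0 x0) := hDOE _ x0 s0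
    linarith
  have hfluct : ∀ h, ∑ ω, π ω * err ω h ≤ 6 * M.B * (M.T + 1) *
      (ε + K * ((M.T + 1) * (M.B * (1 + √m) / (m + 1)))) := by
    intro h
    have hc : 0 ≤ 6 * M.B * (M.T + 1) := by have := M.B_pos; positivity
    have hsplit : ∀ ω, π ω * err ω h = 6 * M.B * (M.T + 1) * ε * π ω
        + 6 * M.B * (M.T + 1) * K * (π ω * M.demandFluct ν s0 m ω h) := fun ω => by
      simp only [err]; ring
    rw [Finset.sum_congr rfl fun ω _ => hsplit ω, Finset.sum_add_distrib, ← Finset.mul_sum,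
      ← Finset.mul_sum, sum_prod_eq_one (M.eta_sum s0), mul_one, mul_assoc _ K, ← mul_add]
    exact mul_le_mul_of_nonneg_left
      (add_le_add le_rfl (mul_le_mul_of_nonneg_left (M.sum_prod_mul_demandFluct_le ν s0 m h) hK)) hc
  calc M.Vn m κ ν x0 s0 - M.Vn m ν.toHist ν x0 s0
      = ∑ ω, π ω * (M.expectHist s0 (M.iPayoff m κ ν x0 ω) -
          M.expectHist s0 (M.iPayoff m ν.toHist ν x0 ω)) := by
        simp only [Vn, mul_sub, Finset.sum_sub_distrib]; rfl
    _ ≤ ∑ ω, π ω * M.expectHist s0 (err ω) :=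
        Finset.sum_le_sum fun ω _ => mul_le_mul_of_nonneg_left (hω ω) (hπ ω)
    _ = M.expectHist s0 (fun h => ∑ ω, π ω * err ω h) := M.sum_mul_expectHist_comm s0 π err
    _ ≤ _ := (M.expectHist_mono s0 hfluct).trans_eq (M.expectHist_const s0 _)

lemma eventually_Vn_sub_le [Nonempty S] {P Q : ℝ} (hreg : M.RegularAssumptions P Q)
    (ν : OblStrategy M) (hDOE : M.IsDOE ν) (s0 : S) (x0 : X0) {ε : ℝ} (hε : 0 < ε) :
    ∀ᶠ m in atTop, ∀ κ : HistStrategy M, M.Vn m κ ν x0 s0 - M.Vn m ν.toHist ν x0 s0 ≤ ε := by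
  set c := 6 * M.B * (M.T + 1)
  have hc : 0 < c := by have := M.B_pos; positivity
  obtain ⟨K, hK, hL⟩ := M.exists_pricesApproxLipschitz hreg (div_pos hε (by positivity : 0 < 2 * c))
  have hlim : Tendsto
      (fun m : ℕ => c * (ε / (2 * c) + K * ((M.T + 1) * (M.B * ((1 + √m) / (m + 1))))))
      atTop (𝓝 (c * (ε / (2 * c) + K * ((M.T + 1) * (M.B * 0))))) :=
    (((tendsto_one_add_sqrt_div_succ.const_mul _).const_mul _).const_mul _ |>.const_add _).const_mul _
  have hlt : c * (ε / (2 * c) + K * ((M.T + 1) * (M.B * 0))) < ε := by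
    field_simp
    linarith
  filter_upwards [hlim.eventually_lt_const hlt] with m hm κ
  refine (M.Vn_sub_le hK hL ν hDOE s0 x0 m κ).trans ?_
  simp only [mul_div_assoc] at hm ⊢
  exact hm.le

lemma abs_iPayoff_le {P Q : ℝ} (hreg : M.RegularAssumptions P Q) (hP : 0 ≤ P) (m : ℕ)
    (κ : HistStrategy M) (ν : OblStrategy M) (x0 : X0) (ω : Fin m → X0) (h : ℕ → S) :
    |M.iPayoff m κ ν x0 ω h| ≤ (M.T + 1) * (Q + 3 * P * M.B) := by
  have hA := M.aggDemandN_div_mem m κ ν x0 ω h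
  have ha : ∀ t, |(M.iTraj m κ ν x0 ω h t).1| ≤ M.B := fun t =>
    abs_le.2 ⟨by linarith [(M.iTraj_fst_mem m κ ν x0 ω h t).1, M.B_pos],
      (M.iTraj_fst_mem m κ ν x0 ω h t).2⟩
  refine (Finset.abs_sum_le_sum_abs _ _).trans ((Finset.sum_le_sum fun t _ => ?_).trans_eq
    (by simp [mul_add] : ∑ _t ∈ Finset.range (M.T + 1), (Q + 3 * P * M.B) = _))
  have hU := hreg.U_bounds t x0 (M.iTraj m κ ν x0 ω h t).2 (h t) (M.iTraj m κ ν x0 ω h t).1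
  have hp : |M.pN m κ ν x0 ω h t| ≤ P := hreg.bound_C (h t) _ (hA t).1
  have hw : |M.wN m κ ν x0 ω h t| ≤ P := by
    cases t with
    | zero => exact hreg.bound_H0 (h 0) _ (hA 0).1
    | succ t => exact hreg.bound_H2 (h t) (h (t + 1)) _ (hA t) _ (hA (t + 1)).1
  have hq : |M.qN m κ ν x0 ω h t| ≤ P := by
    cases t with
    | zero => simpa [qN] using hP
    | succ t => exact hreg.bound_H1 (h t) (h (t + 1)) _ (hA (t + 1)) _ (hA t).1
  have hprev : |if t = 0 then (0 : ℝ) else (M.iTraj m κ ν x0 ω h (t - 1)).1| ≤ M.B := by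
    split_ifs
    · simpa using M.B_pos.le
    · exact ha _
  have hpw := mul_le_mul ((abs_add_le _ _).trans (add_le_add hp hw)) (ha t) (abs_nonneg _)
    (by linarith)
  have hqa := mul_le_mul hq hprev (abs_nonneg _) hP
  rw [← abs_mul] at hpw hqa
  have hUQ : |M.U t x0 (M.iTraj m κ ν x0 ω h t).2 (h t) (M.iTraj m κ ν x0 ω h t).1| ≤ Q :=
    abs_le.2 ⟨by linarith [hU.1, hU.2], hU.2⟩
  calc _ ≤ _ + _ := abs_sub _ _
    _ ≤ Q + (P + P) * M.B + P * M.B := add_le_add ((abs_sub _ _).trans (add_le_add hUQ hpw)) hqa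
    _ = Q + 3 * P * M.B := by ring

lemma abs_Vn_le {P Q : ℝ} (hreg : M.RegularAssumptions P Q) (hP : 0 ≤ P) (m : ℕ)
    (κ : HistStrategy M) (ν : OblStrategy M) (x0 : X0) (s0 : S) :
    |M.Vn m κ ν x0 s0| ≤ (M.T + 1) * (Q + 3 * P * M.B) :=
  abs_sum_mul_le_of_abs_le (fun _ => Finset.prod_nonneg fun _ _ => M.eta_nonneg _ _)
    (sum_prod_eq_one (M.eta_sum s0) m)
    fun ω => M.abs_expectHist_le s0 (M.abs_iPayoff_le hreg hP m κ ν x0 ω)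

end ElecModel

open ElecModel in
theorem doe_has_ame_property_general
    {S : Type*} {X0 : Type*} [Fintype S] [DecidableEq S] [Fintype X0]
    (M : ElecModel S X0) (P Q : ℝ)
    (hreg : RegularAssumptions M P Q)
    (ν : OblStrategy M) (hDOE : M.IsDOE ν) :
    ∀ (s0 : S) (x0 : X0) (κ : ℕ → HistStrategy M),
      Filter.limsup
        (fun n : ℕ =>
          M.Vn (n - 1) (κ n) ν x0 s0 - M.Vn (n - 1) ν.toHist ν x0 s0)
        Filter.atTop ≤ 0 := by
  intro s0 x0 κ
  have : Nonempty S := ⟨s0⟩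
  have hP := hreg.P_nonneg
  have hbdd : ∀ n : ℕ, -(2 * ((M.T + 1) * (Q + 3 * P * M.B))) ≤
      M.Vn (n - 1) (κ n) ν x0 s0 - M.Vn (n - 1) ν.toHist ν x0 s0 := fun n => by
    linarith [(abs_le.1 (M.abs_Vn_le hreg hP (n - 1) (κ n) ν x0 s0)).1,
      (abs_le.1 (M.abs_Vn_le hreg hP (n - 1) ν.toHist ν x0 s0)).2]
  refine limsup_nonpos_of_eventually_le (isCoboundedUnder_le_of_le atTop hbdd) fun ε hε => ?_
  filter_upwards [(tendsto_sub_atTop_nat 1).eventually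
    (M.eventually_Vn_sub_le hreg ν hDOE s0 x0 hε)] with n hn
  exact hn (κ n)

open ElecModel in
/-- Theorem 1 of the paper. Every Dynamic Oblivious Equilibrium has the
Asymptotic Markov Equilibrium property: for every initial exogenous state `s0`, every
initial consumer type `x0`, and every sequence of history-dependent strategies `κ n`
(for the game with `n` consumers, i.e. `n - 1` consumers other than `i`),
`limsup_{n→∞} (Vⁿ(x0, s0 ∣ κ n, ν) - Vⁿ(x0, s0 ∣ ν, ν)) ≤ 0`. -/
theorem doe_has_ame_property
    {S : Type*} {X0 : Type*} [Fintype S] [DecidableEq S] [Fintype X0] [DecidableEq X0]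
    (M : ElecModel S X0) (P Q : ℝ)
    (hreg : RegularAssumptions M P Q)
    (ν : OblStrategy M) (hDOE : M.IsDOE ν) :
    ∀ (s0 : S) (x0 : X0) (κ : ℕ → HistStrategy M),
      Filter.limsup
        (fun n : ℕ =>
          M.Vn (n - 1) (κ n) ν x0 s0 - M.Vn (n - 1) ν.toHist ν x0 s0)
        Filter.atTop ≤ 0 :=
  doe_has_ame_property_general M P Q hreg ν hDOE
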